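/- Let a ∈ ℝ² with 0 < |a| < 1, let ε₀ ∈ (0, 1/4), and let φ ∈ (3π/4, π]. Denote by (ε₀, θ) the point a + ε₀·(cos θ · e₁' + sin θ · e₂') in polar coordinates centered at a, where e₁' = -a/|a| and e₂' is a unit vector orthogonal to e₁'. Let z(φ) = {(ε₀, θ) : θ ∈ [π/2, φ]} be the circular arc, let L₁ = {(ε₀, π/2) + t·(-a/|a|) : t ∈ [0, |a|]}, and set L = z(φ) ∪ L₁. Let I be the segment joining a to 0. Then dist(L, I) = ε₀. -/

import Mathlib

open Real Set Metric

noncomputable def setDist {E : Type*} [MetricSpace E] (A B : Set E) : ℝ :=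
  sInf (Set.image2 dist A B)

/-- With `0 < ‖a‖ < 1`, `ε₀ ∈ (0, 1/4)`, `φ ∈ (3π/4, π]`, polar
coordinates `(ε₀, θ) = a + ε₀(cos θ e₁' + sin θ e₂')` centered at `a` with
`e₁' = -a/‖a‖`, arc `z(φ) = {(ε₀,θ) : θ ∈ [π/2, φ]}`,
`L₁ = {(ε₀, π/2) + t(-a/‖a‖) : t ∈ [0, ‖a‖]}`, `L = z(φ) ∪ L₁`, and `I` the
segment from `a` to `0`, we have `dist(L, I) = ε₀`. -/
theorem stmt2
    (a : EuclideanSpace ℝ (Fin 2)) (ha0 : 0 < ‖a‖) (ha1 : ‖a‖ < 1)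
    (ε₀ φ : ℝ) (hε : ε₀ ∈ Set.Ioo 0 (1/4 : ℝ))
    (hφ : φ ∈ Set.Ioc (3 * π / 4) π)
    (e₁ e₂ : EuclideanSpace ℝ (Fin 2))
    (he₁ : e₁ = -(‖a‖⁻¹ • a)) (he₂ : ‖e₂‖ = 1)
    (horth : inner ℝ e₁ e₂ = (0 : ℝ))
    (p : ℝ → EuclideanSpace ℝ (Fin 2))
    (hp : ∀ θ, p θ = a + ε₀ • (Real.cos θ • e₁ + Real.sin θ • e₂))
    (zφ L₁ L I : Set (EuclideanSpace ℝ (Fin 2)))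
    (hz : zφ = p '' Set.Icc (π / 2) φ)
    (hL₁ : L₁ = (fun t : ℝ => p (π / 2) + t • (-(‖a‖⁻¹ • a))) '' Set.Icc 0 ‖a‖)
    (hL : L = zφ ∪ L₁)
    (hI : I = segment ℝ a 0) :
    setDist L I = ε₀ := by
  have hπ2φ : π / 2 ≤ φ := by
    have := hφ.1; have hπ := Real.pi_pos; linarith
  have he₁norm : ‖e₁‖ = 1 := by
    rw [he₁, norm_neg, norm_smul, norm_inv, norm_norm]
    field_simp
  have hnorm : ∀ u v : ℝ, ‖u • e₁ + v • e₂‖ ^ 2 = u ^ 2 + v ^ 2 := by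
    intro u v
    rw [norm_add_sq_real, norm_smul, norm_smul, real_inner_smul_left,
      real_inner_smul_right, horth, he₁norm, he₂]
    simp [sq_abs]
  have ha : a = -(‖a‖ • e₁) := by
    rw [he₁, smul_neg, neg_neg, smul_smul, mul_inv_cancel₀ ha0.ne', one_smul]
  -- lower bound
  have hlb : ∀ x ∈ L, ∀ y ∈ I, ε₀ ≤ dist x y := by
    intro x hx y hy
    rw [hI] at hy
    obtain ⟨u, v, hu, hv, huv, rfl⟩ := hy
    -- y = u • a + v • 0 = u • a
    have hy' : u • a + v • (0 : EuclideanSpace ℝ (Fin 2)) = u • a := by simp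
    rw [hL] at hx
    have key : ∀ U V : ℝ, U ≤ 0 ∨ 0 ≤ 1 - u →
        x - (u • a + v • (0 : EuclideanSpace ℝ (Fin 2))) =
          U • e₁ + V • e₂ → ε₀ ^ 2 ≤ U ^ 2 + V ^ 2 → ε₀ ≤ dist x (u • a + v • (0:EuclideanSpace ℝ (Fin 2))) := by
      intro U V _ hxy hUV
      have : dist x (u • a + v • (0:EuclideanSpace ℝ (Fin 2))) ^ 2 = U ^ 2 + V ^ 2 := by
        rw [dist_eq_norm, hxy, hnorm]
      nlinarith [dist_nonneg (x := x) (y := u • a + v • (0:EuclideanSpace ℝ (Fin 2))), hε.1]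
    have hu1 : u ≤ 1 := by linarith
    rcases hx with hx | hx
    · rw [hz] at hx
      obtain ⟨θ, hθ, rfl⟩ := hx
      have hcos : Real.cos θ ≤ 0 := by
        apply Real.cos_nonpos_of_pi_div_two_le_of_le hθ.1
        have := hθ.2; have := hφ.2; have hπ := Real.pi_pos; linarith
      apply key (ε₀ * Real.cos θ - (1 - u) * ‖a‖) (ε₀ * Real.sin θ) (Or.inr (by linarith))
      · rw [hp θ, hy']
        conv_lhs => rw [ha]
        module
      · have hsc := Real.sin_sq_add_cos_sq θ
        nlinarith [hε.1, mul_nonneg (sub_nonneg.2 hu1) ha0.le, mul_nonpos_of_nonneg_of_nonpos hε.1.le hcos]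
    · rw [hL₁] at hx
      obtain ⟨t, ht, rfl⟩ := hx
      apply key (t - (1 - u) * ‖a‖) ε₀ (Or.inr (by linarith))
      · rw [hp (π/2), hy', Real.cos_pi_div_two, Real.sin_pi_div_two, ← he₁]
        conv_lhs => rw [ha]
        module
      · nlinarith
  have hne : (Set.image2 dist L I).Nonempty := by
    refine ⟨dist (p (π/2)) a, Set.mem_image2_of_mem ?_ ?_⟩
    · rw [hL, hz]; exact Or.inl ⟨π/2, ⟨le_refl _, hπ2φ⟩, rfl⟩
    · rw [hI]; exact left_mem_segment ℝ a 0
  have hbdd : BddBelow (Set.image2 dist L I) := by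
    refine ⟨ε₀, ?_⟩
    rintro d ⟨x, hx, y, hy, rfl⟩
    exact hlb x hx y hy
  have hval : dist (p (π/2)) a = ε₀ := by
    rw [hp (π/2), Real.cos_pi_div_two, Real.sin_pi_div_two, dist_eq_norm]
    have : a + ε₀ • ((0:ℝ) • e₁ + (1:ℝ) • e₂) - a = ε₀ • e₂ := by module
    rw [this, norm_smul, he₂, mul_one, Real.norm_eq_abs, abs_of_pos hε.1]
  apply le_antisymm
  · rw [← hval]
    apply csInf_le hbdd
    refine Set.mem_image2_of_mem ?_ ?_
    · rw [hL, hz]; exact Or.inl ⟨π/2, ⟨le_refl _, hπ2φ⟩, rfl⟩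
    · rw [hI]; exact left_mem_segment ℝ a 0
  · apply le_csInf hne
    rintro d ⟨x, hx, y, hy, rfl⟩
    exact hlb x hx y hy
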